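/- arXiv:1206.3100 — 7 statements merged into one kernel-verified Lean document; each statement's English description precedes it below -/
import Mathlib

section
/- For a maximal monotone multifunction T, the Fitzpatrick function F_{T,2}(x,y) = sup over (x₁,y₁) in the graph of T of (⟨x, y₁⟩ + ⟨x₁, y⟩ − ⟨x₁, y₁⟩) satisfies F_{T,2}(x,y) ≥ ⟨x,y⟩ for all (x,y), with equality if and only if y ∈ Tx. -/
/-! Writing the Fitzpatrick summand as `⟨x, y⟩ − ⟨x − x₁, y − y₁⟩` shows that
`F_{T,2}(x, y) ≤ ⟨x, y⟩` says exactly that `(x, y)` is monotonically related to the graph of `T`,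
which by maximality means `y ∈ T x`, and by monotonicity follows from it. The summand at
`(x₁, y₁) = (x, y)` gives `F_{T,2}(x, y) ≥ ⟨x, y⟩` when `y ∈ T x`; otherwise `F_{T,2}(x, y) > ⟨x, y⟩`
by the first observation. -/

lemma ContinuousLinearMap.apply_add_apply_sub_apply_eq {R M N : Type*} [Ring R]
    [TopologicalSpace M] [AddCommGroup M] [Module R M]
    [TopologicalSpace N] [AddCommGroup N] [Module R N] [IsTopologicalAddGroup N]
    (y y₁ : M →L[R] N) (x x₁ : M) :
    y₁ x + y x₁ - y₁ x₁ = y x - (y - y₁) (x - x₁) := by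
  simp only [sub_apply, map_sub]
  abel

section Fitzpatrick

variable {X : Type*} [TopologicalSpace X] [AddCommGroup X] [Module ℝ X]

noncomputable def fitzpatrick (T : X → Set (StrongDual ℝ X)) (x : X) (y : StrongDual ℝ X) :
    EReal :=
  ⨆ p : {p : X × StrongDual ℝ X // p.2 ∈ T p.1}, ((p.1.2 x + y p.1.1 - p.1.2 p.1.1 : ℝ) : EReal)

def MonotonicallyRelated (T : X → Set (StrongDual ℝ X)) (x : X) (y : StrongDual ℝ X) : Prop :=
  ∀ x₁ y₁, y₁ ∈ T x₁ → 0 ≤ (y - y₁) (x - x₁)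

variable {T : X → Set (StrongDual ℝ X)} {x : X} {y : StrongDual ℝ X}

lemma sub_apply_le_fitzpatrick {x₁ : X} {y₁ : StrongDual ℝ X} (h₁ : y₁ ∈ T x₁) :
    ((y x - (y - y₁) (x - x₁) : ℝ) : EReal) ≤ fitzpatrick T x y := by
  rw [← y.apply_add_apply_sub_apply_eq]
  exact le_iSup (fun p : {p : X × StrongDual ℝ X // p.2 ∈ T p.1} =>
    ((p.1.2 x + y p.1.1 - p.1.2 p.1.1 : ℝ) : EReal)) ⟨(x₁, y₁), h₁⟩

lemma apply_le_fitzpatrick_of_mem (hy : y ∈ T x) : ((y x : ℝ) : EReal) ≤ fitzpatrick T x y := by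
  simpa using sub_apply_le_fitzpatrick (x := x) hy

lemma fitzpatrick_le_apply_iff :
    fitzpatrick T x y ≤ ((y x : ℝ) : EReal) ↔ MonotonicallyRelated T x y := by
  constructor
  · intro hle x₁ y₁ h₁
    have := (sub_apply_le_fitzpatrick (x := x) (y := y) h₁).trans hle
    rw [EReal.coe_le_coe_iff] at this
    linarith
  · intro hrel
    refine iSup_le fun ⟨⟨x₁, y₁⟩, h₁⟩ => ?_
    rw [EReal.coe_le_coe_iff, y.apply_add_apply_sub_apply_eq]
    linarith [hrel x₁ y₁ h₁]

lemma apply_le_fitzpatrick (hmax : ∀ x y, MonotonicallyRelated T x y → y ∈ T x) :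
    ((y x : ℝ) : EReal) ≤ fitzpatrick T x y := by
  by_contra hlt
  exact hlt <| apply_le_fitzpatrick_of_mem <|
    hmax x y <| fitzpatrick_le_apply_iff.mp (not_le.mp hlt).le

end Fitzpatrick

theorem stmt2_general
    {X : Type*} [NormedAddCommGroup X] [NormedSpace ℝ X]
    (T : X → Set (StrongDual ℝ X))
    (hmono : ∀ x₁ y₁ x₂ y₂, y₁ ∈ T x₁ → y₂ ∈ T x₂ → 0 ≤ (y₂ - y₁) (x₂ - x₁))
    (hmax : ∀ x y, (∀ x₁ y₁, y₁ ∈ T x₁ → 0 ≤ (y - y₁) (x - x₁)) → y ∈ T x) :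
    ∀ (x : X) (y : StrongDual ℝ X),
      ((y x : ℝ) : EReal) ≤
        (⨆ p : {p : X × StrongDual ℝ X // p.2 ∈ T p.1},
          ((p.1.2 x + y p.1.1 - p.1.2 p.1.1 : ℝ) : EReal)) ∧
      ((⨆ p : {p : X × StrongDual ℝ X // p.2 ∈ T p.1},
          ((p.1.2 x + y p.1.1 - p.1.2 p.1.1 : ℝ) : EReal)) = ((y x : ℝ) : EReal)
        ↔ y ∈ T x) := by
  intro x y
  change _ ≤ fitzpatrick T x y ∧ (fitzpatrick T x y = _ ↔ _)
  refine ⟨apply_le_fitzpatrick hmax, fun heq => hmax x y ?_, fun hy => ?_⟩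
  · exact fitzpatrick_le_apply_iff.mp heq.le
  · have hrel : MonotonicallyRelated T x y := fun x₁ y₁ h₁ => hmono x₁ y₁ x y h₁ hy
    exact (fitzpatrick_le_apply_iff.mpr hrel).antisymm (apply_le_fitzpatrick_of_mem hy)

/-- For a maximal monotone multifunction `T`, the Fitzpatrick function
`F_{T,2}(x,y) = sup_{(x₁,y₁) ∈ G(T)} (⟨x, y₁⟩ + ⟨x₁, y⟩ − ⟨x₁, y₁⟩)` (in `EReal`)
satisfies `F_{T,2}(x,y) ≥ ⟨x,y⟩`, with equality iff `y ∈ T x`. -/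
theorem stmt2
    {X : Type*} [NormedAddCommGroup X] [NormedSpace ℝ X] [CompleteSpace X]
    (T : X → Set (StrongDual ℝ X))
    (hmono : ∀ x₁ y₁ x₂ y₂, y₁ ∈ T x₁ → y₂ ∈ T x₂ → 0 ≤ (y₂ - y₁) (x₂ - x₁))
    (hmax : ∀ x y, (∀ x₁ y₁, y₁ ∈ T x₁ → 0 ≤ (y - y₁) (x - x₁)) → y ∈ T x) :
    ∀ (x : X) (y : StrongDual ℝ X),
      ((y x : ℝ) : EReal) ≤
        (⨆ p : {p : X × StrongDual ℝ X // p.2 ∈ T p.1},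
          ((p.1.2 x + y p.1.1 - p.1.2 p.1.1 : ℝ) : EReal)) ∧
      ((⨆ p : {p : X × StrongDual ℝ X // p.2 ∈ T p.1},
          ((p.1.2 x + y p.1.1 - p.1.2 p.1.1 : ℝ) : EReal)) = ((y x : ℝ) : EReal)
        ↔ y ∈ T x) :=
  stmt2_general T hmono hmax
end

section
/- For any nonzero real ε, the linear operator on ℝ² given by the matrix A = [[1, −2ε],[2ε, 0]] is monotone (2-monotone) but not 3-monotone: there exist x₁, x₂, x₃ ∈ ℝ² with ⟨x₂−x₁, Ax₁⟩ + ⟨x₃−x₂, Ax₂⟩ + ⟨x₁−x₃, Ax₃⟩ > 0. -/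
/-!
The symmetric part of `A` is `diag(1, 0)`, which is positive semidefinite, so `A` is monotone.
Its skew part, however, contributes to a three-cycle sum at first order in the size of the cycle,
against the second-order cost of the symmetric part: on the cycle `0 → e₂ → -ε e₁` the skew part
gives `2ε²` while the symmetric part only takes back `ε²`.
-/

open Matrix

def threeCycleSum {n R : Type*} [Fintype n] [CommRing R] (A : Matrix n n R) (x₁ x₂ x₃ : n → R) :
    R :=
  (x₂ - x₁) ⬝ᵥ A *ᵥ x₁ + (x₃ - x₂) ⬝ᵥ A *ᵥ x₂ + (x₁ - x₃) ⬝ᵥ A *ᵥ x₃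

section FinTwo

variable {R : Type*}

theorem dotProduct_mulVec_self_fin_two [CommRing R] (a b c d : R) (z : Fin 2 → R) :
    z ⬝ᵥ !![a, b; c, d] *ᵥ z = a * z 0 ^ 2 + (b + c) * z 0 * z 1 + d * z 1 ^ 2 := by
  simp only [mulVec_fin_two, vec2_dotProduct, of_apply, cons_val', cons_val_zero, cons_val_one,
    cons_val_fin_one]
  ring

theorem dotProduct_mulVec_self_nonneg_fin_two [Field R] [LinearOrder R] [IsStrictOrderedRing R]
    {a b c d : R} (ha : 0 ≤ a) (hd : 0 ≤ d) (hdisc : (b + c) ^ 2 ≤ 4 * a * d) (z : Fin 2 → R) :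
    0 ≤ z ⬝ᵥ !![a, b; c, d] *ᵥ z := by
  rw [dotProduct_mulVec_self_fin_two]
  rcases ha.eq_or_lt with rfl | ha
  · have hbc : b + c = 0 := pow_eq_zero_iff two_ne_zero |>.mp (by nlinarith [sq_nonneg (b + c)])
    rw [hbc]
    nlinarith [sq_nonneg (z 1)]
  · -- completing the square: `4a · q(z) = (2a z₀ + (b + c) z₁)² + (4ad - (b + c)²) z₁²`
    have hscaled : 0 ≤ 4 * a * (a * z 0 ^ 2 + (b + c) * z 0 * z 1 + d * z 1 ^ 2) := by
      nlinarith [sq_nonneg (2 * a * z 0 + (b + c) * z 1),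
        mul_nonneg (sub_nonneg.2 hdisc) (sq_nonneg (z 1))]
    exact nonneg_of_mul_nonneg_right hscaled (by positivity : (0 : R) < 4 * a)

theorem threeCycleSum_fin_two [CommRing R] (a b c d t : R) :
    threeCycleSum !![a, b; c, d] 0 ![0, 1] ![-t, 0] = -(a * t ^ 2 + b * t + d) := by
  simp only [threeCycleSum, mulVec_fin_two, vec2_dotProduct, of_apply, cons_val', cons_val_zero,
    cons_val_one, cons_val_fin_one, Pi.sub_apply, Pi.zero_apply]
  ring

end FinTwo

/-- For nonzero `ε`, the linear map of `ℝ²` given by the matrix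
`A = [[1, −2ε],[2ε, 0]]` is monotone (2-monotone) but not 3-monotone. -/
theorem stmt6 (ε : ℝ) (hε : ε ≠ 0) :
    (∀ z : Fin 2 → ℝ, 0 ≤ z ⬝ᵥ (!![1, -2*ε; 2*ε, 0]).mulVec z) ∧
    (∃ x₁ x₂ x₃ : Fin 2 → ℝ,
      0 < (x₂ - x₁) ⬝ᵥ (!![1, -2*ε; 2*ε, 0]).mulVec x₁
        + (x₃ - x₂) ⬝ᵥ (!![1, -2*ε; 2*ε, 0]).mulVec x₂
        + (x₁ - x₃) ⬝ᵥ (!![1, -2*ε; 2*ε, 0]).mulVec x₃) := by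
  refine ⟨dotProduct_mulVec_self_nonneg_fin_two zero_le_one le_rfl (by norm_num),
    0, ![0, 1], ![-ε, 0], ?_⟩
  change 0 < threeCycleSum _ _ _ _
  rw [threeCycleSum_fin_two]
  nlinarith [sq_pos_of_ne_zero hε]
end

section
/- Let X be a real Hilbert space and A : X → X a continuous linear map with symmetric part S = (A + A*)/2 positive definite (coercive) and skew part W = (A − A*)/2. If the operator H₃ = S − (1/4)A*S⁻¹A = (3/4)S − (1/4)W S⁻¹ W* is positive semidefinite, then A is 3-monotone. -/
/-!
Write `a = x₁ - x₂`, `b = x₂ - x₃`; the cyclic sum is `-(⟪a, A a⟫ + ⟪a, A b⟫ + ⟪b, A b⟫)`.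
The quadratic forms of `A` and `S` agree, so completing the square in `a`,
`⟪a, S a⟫ + ⟪a, A b⟫ ≥ -¼ ⟪A b, S⁻¹ A b⟫`, and positivity of `H₃` at `b`,
`⟪b, S b⟫ ≥ ¼ ⟪A b, S⁻¹ A b⟫`, add up to the claim.
-/

open scoped RealInnerProductSpace

section CyclicSum

variable {𝕜 E F : Type*} [RCLike 𝕜] [NormedAddCommGroup E] [InnerProductSpace 𝕜 E]
  [FunLike F E E] [AddMonoidHomClass F E E]

theorem inner_sub_apply_cyclic_sum (A : F) (x₁ x₂ x₃ : E) :
    inner 𝕜 (x₂ - x₁) (A x₁) + inner 𝕜 (x₃ - x₂) (A x₂) + inner 𝕜 (x₁ - x₃) (A x₃) =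
      -(inner 𝕜 (x₁ - x₂) (A (x₁ - x₂)) + inner 𝕜 (x₁ - x₂) (A (x₂ - x₃)) +
        inner 𝕜 (x₂ - x₃) (A (x₂ - x₃))) := by
  simp only [inner_sub_left, inner_sub_right, map_sub]
  ring

end CyclicSum

section SymmetricPart

open ContinuousLinearMap

variable {X : Type*} [NormedAddCommGroup X] [InnerProductSpace ℝ X]

/-- Completing the square: the left-hand side is `⟪c, T c⟫` for `c = a + ½ z`. -/
theorem ContinuousLinearMap.IsPositive.inner_add_inner_add_quarter_inner_nonneg
    {T : X →L[ℝ] X} (hT : T.IsPositive) (a z : X) :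
    0 ≤ ⟪a, T a⟫ + ⟪a, T z⟫ + 1 / 4 * ⟪T z, z⟫ := by
  obtain ⟨hsymm, hnonneg⟩ := (isPositive_iff T).mp hT
  have hc := hnonneg (a + (1 / 2 : ℝ) • z)
  simp only [map_add, map_smul, inner_add_left, inner_add_right, real_inner_smul_left,
    real_inner_smul_right] at hc
  have hTaz : ⟪T a, z⟫ = ⟪a, T z⟫ := hsymm a z
  rw [hTaz, real_inner_comm a (T a), real_inner_comm a (T z)] at hc
  linarith

variable [CompleteSpace X]

theorem inner_half_add_adjoint_apply_self (A : X →L[ℝ] X) (x : X) :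
    ⟪x, ((1 / 2 : ℝ) • (A + adjoint A)) x⟫ = ⟪x, A x⟫ := by
  simp only [smul_apply, add_apply, inner_smul_right, inner_add_right, adjoint_inner_right,
    real_inner_comm (A x) x]
  ring

theorem isSelfAdjoint_half_add_adjoint (A : X →L[ℝ] X) :
    IsSelfAdjoint ((1 / 2 : ℝ) • (A + adjoint A)) := by
  rw [← star_eq_adjoint]
  exact (IsSelfAdjoint.all _).smul (IsSelfAdjoint.add_star_self A)

end SymmetricPart

theorem stmt9_general
    {X : Type*} [NormedAddCommGroup X] [InnerProductSpace ℝ X] [CompleteSpace X]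
    (A : X →L[ℝ] X)
    (S : X →L[ℝ] X) (hS : S = (1/2 : ℝ) • (A + ContinuousLinearMap.adjoint A))
    (hSpos : ∀ x : X, x ≠ 0 → 0 < ⟪x, S x⟫)
    (Sinv : X →L[ℝ] X) (hinv₁ : S.comp Sinv = ContinuousLinearMap.id ℝ X)
    (hH : ∀ x : X,
      0 ≤ ⟪x, (S - (1/4 : ℝ) • ((ContinuousLinearMap.adjoint A).comp (Sinv.comp A))) x⟫) :
    ∀ x₁ x₂ x₃ : X,
      ⟪x₂ - x₁, A x₁⟫ + ⟪x₃ - x₂, A x₂⟫ + ⟪x₁ - x₃, A x₃⟫ ≤ 0 := by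
  have hquad : ∀ x, ⟪x, A x⟫ = ⟪x, S x⟫ := fun x => by
    rw [hS, inner_half_add_adjoint_apply_self]
  have hSpositive : S.IsPositive := by
    refine (ContinuousLinearMap.isPositive_iff' S).mpr
      ⟨hS ▸ isSelfAdjoint_half_add_adjoint A, fun x => ?_⟩
    rcases eq_or_ne x 0 with rfl | hx
    · simp
    · exact real_inner_comm x (S x) ▸ (hSpos x hx).le
  intro x₁ x₂ x₃
  set a := x₁ - x₂
  set b := x₂ - x₃
  have hsquare : 0 ≤ ⟪a, S a⟫ + ⟪a, A b⟫ + 1 / 4 * ⟪A b, Sinv (A b)⟫ := by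
    have hSSinv : S (Sinv (A b)) = A b := congr($hinv₁ (A b))
    simpa only [hSSinv] using hSpositive.inner_add_inner_add_quarter_inner_nonneg a (Sinv (A b))
  have hHb : 0 ≤ ⟪b, S b⟫ - 1 / 4 * ⟪A b, Sinv (A b)⟫ := by
    simpa only [sub_apply, smul_apply, ContinuousLinearMap.comp_apply, inner_sub_right,
      inner_smul_right, ContinuousLinearMap.adjoint_inner_right] using hH b
  rw [inner_sub_apply_cyclic_sum, hquad a, hquad b]
  linarith

/-- Let `A` be a continuous linear map on a real Hilbert space whose
symmetric part `S = (A + A*)/2` is positive definite with bounded inverse `Sinv`.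
If `H₃ = S − (1/4) A* S⁻¹ A` is positive semidefinite, then `A` is 3-monotone. -/
theorem stmt9
    {X : Type*} [NormedAddCommGroup X] [InnerProductSpace ℝ X] [CompleteSpace X]
    (A : X →L[ℝ] X)
    (S : X →L[ℝ] X) (hS : S = (1/2 : ℝ) • (A + ContinuousLinearMap.adjoint A))
    (hSpos : ∀ x : X, x ≠ 0 → 0 < ⟪x, S x⟫)
    (Sinv : X →L[ℝ] X) (hinv₁ : S.comp Sinv = ContinuousLinearMap.id ℝ X)
    (hinv₂ : Sinv.comp S = ContinuousLinearMap.id ℝ X)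
    (hH : ∀ x : X,
      0 ≤ ⟪x, (S - (1/4 : ℝ) • ((ContinuousLinearMap.adjoint A).comp (Sinv.comp A))) x⟫) :
    ∀ x₁ x₂ x₃ : X,
      ⟪x₂ - x₁, A x₁⟫ + ⟪x₃ - x₂, A x₂⟫ + ⟪x₁ - x₃, A x₃⟫ ≤ 0 :=
  stmt9_general A S hS hSpos Sinv hinv₁ hH
end

section
/- Let A be a real 2×2 matrix with positive definite symmetric part S and skew-symmetric part W = rJ where J = [[0,−1],[1,0]] and r ≠ 0. Define θ ∈ (0, π/2) by |r| = √(det S)·tan θ. Then A is n-monotone if and only if nθ ≤ π. -/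
/-!
Choose `P` with `Pᵀ S P = 1` (a Cholesky factor) and orientation such that `r · det P = tan θ`.
Since `Pᵀ J P = det P · J`, the congruent matrix `Pᵀ A P = 1 + tan θ · J` is a positive multiple
of the rotation by `θ`, and `n`-monotonicity is invariant under congruence and positive scaling.
Identifying `ℝ²` with `ℂ`, monotonicity of the rotation says that the Hermitian form
`z ↦ Re (e^{iθ} ∑ conj z_{i+1} z_i)` on `ℂ^n` is bounded by `cos θ ‖z‖²`. This form is diagonalised
by the characters of `ℤ/n`, with eigenvalues `cos (θ + 2πk/n)`, `0 ≤ k < n`; all of them are at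
most `cos θ` exactly when `2π/n ≥ 2θ`.
-/

open Matrix Real

open ComplexConjugate

theorem Real.cos_le_cos_of_le_of_le_two_pi_sub {θ s : ℝ} (hθ : 0 ≤ θ) (h₁ : θ ≤ s)
    (h₂ : s ≤ 2 * π - θ) : cos s ≤ cos θ := by
  rcases le_or_gt s π with hs | hs
  · exact cos_le_cos_of_nonneg_of_le_pi hθ hs h₁
  · rw [← cos_two_pi_sub s]
    exact cos_le_cos_of_nonneg_of_le_pi hθ (by linarith) (by linarith)

theorem Complex.re_exp_mul_I_mul_exp_mul_I (a b : ℝ) :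
    (exp (a * I) * exp (b * I)).re = Real.cos (a + b) := by
  rw [← Complex.exp_add, ← add_mul, ← ofReal_add, exp_ofReal_mul_I_re]

namespace AddChar

section FiniteAbelian

variable {G : Type*} [AddCommGroup G] [Fintype G]

theorem sum_apply_mul_norm_sum_sq (g : G) (z : G → ℂ) :
    ∑ ψ : AddChar G ℂ, ψ g * (‖∑ x, ψ x * z x‖ ^ 2 : ℝ)
      = Fintype.card G * ∑ x, conj (z (x + g)) * z x := by
  classical
  calc ∑ ψ : AddChar G ℂ, ψ g * (‖∑ x, ψ x * z x‖ ^ 2 : ℝ)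
      = ∑ ψ : AddChar G ℂ, ∑ x, ∑ y, ψ (g - x + y) * (conj (z x) * z y) := by
        refine Finset.sum_congr rfl fun ψ _ => ?_
        rw [Complex.ofReal_pow, ← Complex.conj_mul', map_sum, Finset.sum_mul_sum, Finset.mul_sum]
        refine Finset.sum_congr rfl fun x _ => (Finset.mul_sum _ _ _).trans <|
          Finset.sum_congr rfl fun y _ => ?_
        rw [map_mul, ← map_neg_eq_conj, sub_eq_add_neg, map_add_eq_mul, map_add_eq_mul]
        ring
    _ = ∑ x, ∑ y, (∑ ψ : AddChar G ℂ, ψ (g - x + y)) * (conj (z x) * z y) := by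
        simp only [Finset.sum_mul]
        rw [Finset.sum_comm]
        exact Finset.sum_congr rfl fun _ _ => Finset.sum_comm
    _ = Fintype.card G * ∑ x, conj (z (x + g)) * z x := by
        simp only [sum_apply_eq_ite, ite_mul, zero_mul]
        rw [Finset.sum_comm, Finset.mul_sum]
        refine Finset.sum_congr rfl fun y _ => ?_
        rw [Finset.sum_eq_single (y + g) (fun x _ hx => if_neg ?_) (by simp), if_pos (by abel)]
        contrapose! hx
        exact eq_of_sub_eq_zero (by rw [← neg_eq_zero, ← hx]; abel)

theorem forall_re_mul_sum_conj_add_mul_le_iff (g : G) (c : ℂ) (M : ℝ) :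
    (∀ z : G → ℂ, (c * ∑ x, conj (z (x + g)) * z x).re ≤ M * ∑ x, ‖z x‖ ^ 2) ↔
      ∀ ψ : AddChar G ℂ, (c * ψ g).re ≤ M := by
  have hG : (0 : ℝ) < Fintype.card G := by exact_mod_cast Fintype.card_pos
  constructor
  · intro h ψ
    -- test against the character `ψ⁻¹ = conj ∘ ψ`, for which every summand equals `ψ g`
    have hterm : ∀ x, conj (ψ (-(x + g))) * ψ (-x) = ψ g := fun x => by
      rw [map_neg_eq_conj, Complex.conj_conj, ← map_add_eq_mul, add_neg_cancel_comm]
    have hψ := h fun x => ψ (-x)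
    simp only [hterm, norm_apply, Finset.sum_const, Finset.card_univ, nsmul_eq_mul] at hψ
    rw [mul_left_comm, ← Complex.ofReal_natCast, Complex.re_ofReal_mul, one_pow, mul_one,
      mul_comm M] at hψ
    exact le_of_mul_le_mul_left hψ hG
  · intro h z
    have parseval := sum_apply_mul_norm_sum_sq (0 : G) z
    simp only [map_zero_eq_one, one_mul, add_zero, Complex.conj_mul'] at parseval
    refine le_of_mul_le_mul_left ?_ hG
    calc (Fintype.card G : ℝ) * (c * ∑ x, conj (z (x + g)) * z x).re
        = ∑ ψ : AddChar G ℂ, (c * ψ g).re * ‖∑ x, ψ x * z x‖ ^ 2 := by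
          rw [← Complex.re_ofReal_mul, mul_left_comm, Complex.ofReal_natCast,
            ← sum_apply_mul_norm_sum_sq, Finset.mul_sum, Complex.re_sum]
          simp only [← mul_assoc, Complex.re_mul_ofReal]
      _ ≤ ∑ ψ : AddChar G ℂ, M * ‖∑ x, ψ x * z x‖ ^ 2 :=
          Finset.sum_le_sum fun ψ _ => mul_le_mul_of_nonneg_right (h ψ) (by positivity)
      _ = (Fintype.card G : ℝ) * (M * ∑ x, ‖z x‖ ^ 2) := by
          rw [← Finset.mul_sum, mul_left_comm]
          congr 1
          exact_mod_cast parseval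

end FiniteAbelian

variable {n : ℕ} [NeZero n]

def finPow {M : Type*} [Monoid M] (ω : M) (hω : ω ^ n = 1) : AddChar (Fin n) M where
  toFun x := ω ^ (x : ℕ)
  map_zero_eq_one' := pow_zero ω
  map_add_eq_mul' x y := by rw [Fin.val_add, ← pow_eq_pow_mod _ hω, pow_add]

theorem finPow_apply_one {M : Type*} [Monoid M] (ω : M) (hω : ω ^ n = 1) :
    finPow ω hω 1 = ω :=
  ((congrArg (ω ^ ·) (Fin.val_one' n)).trans (pow_eq_pow_mod 1 hω).symm).trans (pow_one ω)

open Fin.NatCast in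
theorem apply_one_pow_eq_one {M : Type*} [Monoid M] (ψ : AddChar (Fin n) M) : ψ 1 ^ n = 1 := by
  rw [← map_nsmul_eq_pow, (nsmul_one n).trans (Fin.natCast_self n), map_zero_eq_one]

theorem forall_re_exp_mul_apply_one_le_cos_iff {θ : ℝ} (hθ₀ : 0 ≤ θ) (hθπ : θ ≤ π) :
    (∀ ψ : AddChar (Fin n) ℂ, (Complex.exp (θ * Complex.I) * ψ 1).re ≤ cos θ) ↔ n * θ ≤ π := by
  have hn : (0 : ℝ) < n := by exact_mod_cast Nat.pos_of_ne_zero (NeZero.ne n)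
  constructor
  · intro h
    by_contra! hlt
    have hω : Complex.exp (↑(-(2 * π / n)) * Complex.I) ^ n = 1 := by
      have : (n : ℂ) ≠ 0 := by exact_mod_cast NeZero.ne n
      rw [← Complex.exp_nat_mul, Complex.exp_eq_one_iff]
      exact ⟨-1, by push_cast; field_simp⟩
    have hle := h (finPow _ hω)
    rw [finPow_apply_one, Complex.re_exp_mul_I_mul_exp_mul_I, ← sub_eq_add_neg, ← cos_abs] at hle
    have hclose : |θ - 2 * π / n| < θ := by
      have : 2 * π / n < 2 * θ := by rw [div_lt_iff₀ hn]; linarith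
      rw [abs_lt]; constructor <;> linarith [div_pos two_pi_pos hn]
    exact hle.not_gt (cos_lt_cos_of_nonneg_of_le_pi (abs_nonneg _) hθπ hclose)
  · intro h ψ
    obtain ⟨k, hk, hψk⟩ := (Complex.isPrimitiveRoot_exp n (NeZero.ne n)).eq_pow_of_pow_eq_one
      (apply_one_pow_eq_one ψ)
    have hψ : ψ 1 = Complex.exp (↑(2 * π * k / n) * Complex.I) := by
      rw [← hψk, ← Complex.exp_nat_mul]; push_cast; ring_nf
    have hk' : (k : ℝ) + 1 ≤ n := by exact_mod_cast hk
    rw [hψ, Complex.re_exp_mul_I_mul_exp_mul_I]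
    refine cos_le_cos_of_le_of_le_two_pi_sub hθ₀ (le_add_of_nonneg_right (by positivity)) ?_
    rw [← le_sub_iff_add_le', div_le_iff₀ hn]
    nlinarith [pi_pos]

end AddChar

namespace Matrix

def IsNMonotone {m : Type*} [Fintype m] (n : ℕ) [NeZero n] (A : Matrix m m ℝ) : Prop :=
  ∀ x : Fin n → m → ℝ, ∑ i : Fin n, (x (i + 1) - x i) ⬝ᵥ A *ᵥ x i ≤ 0

section IsNMonotone

variable {m : Type*} [Fintype m] {n : ℕ} [NeZero n] {A : Matrix m m ℝ}

theorem IsNMonotone.transpose_mul_mul (hA : IsNMonotone n A) (P : Matrix m m ℝ) :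
    IsNMonotone n (Pᵀ * A * P) := by
  intro x
  simpa [← mulVec_mulVec, dotProduct_mulVec, vecMul_transpose, mulVec_sub] using
    hA fun i => P *ᵥ x i

theorem isNMonotone_transpose_mul_mul_iff [DecidableEq m] {P : Matrix m m ℝ}
    (hP : IsUnit P.det) : IsNMonotone n (Pᵀ * A * P) ↔ IsNMonotone n A := by
  refine ⟨fun h => ?_, fun h => h.transpose_mul_mul P⟩
  convert h.transpose_mul_mul P⁻¹ using 1
  rw [Matrix.mul_assoc, Matrix.mul_assoc, mul_nonsing_inv P hP, Matrix.mul_one,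
    ← Matrix.mul_assoc, ← transpose_mul, mul_nonsing_inv P hP, transpose_one, Matrix.one_mul]

theorem IsNMonotone.smul (hA : IsNMonotone n A) {c : ℝ} (hc : 0 ≤ c) :
    IsNMonotone n (c • A) := by
  intro x
  simpa [smul_mulVec, ← Finset.mul_sum] using mul_nonpos_of_nonneg_of_nonpos hc (hA x)

theorem isNMonotone_smul_iff {c : ℝ} (hc : 0 < c) : IsNMonotone n (c • A) ↔ IsNMonotone n A :=
  ⟨fun h => by simpa [smul_smul, hc.ne'] using h.smul (inv_nonneg.2 hc.le), fun h => h.smul hc.le⟩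

end IsNMonotone

theorem dotProduct_rotation_mulVec (θ : ℝ) (u v : ℂ) :
    ![u.re, u.im] ⬝ᵥ !![cos θ, -sin θ; sin θ, cos θ] *ᵥ ![v.re, v.im]
      = (Complex.exp (θ * Complex.I) * (conj u * v)).re := by
  simp only [vec2_dotProduct, mulVec, of_apply, cons_val_zero, cons_val_one, cons_val_fin_one,
    Complex.mul_re, Complex.mul_im, Complex.conj_re, Complex.conj_im, Complex.exp_ofReal_mul_I_re,
    Complex.exp_ofReal_mul_I_im]
  ring

theorem isNMonotone_rotation_iff {n : ℕ} [NeZero n] (θ : ℝ) :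
    IsNMonotone n !![cos θ, -sin θ; sin θ, cos θ] ↔
      ∀ z : Fin n → ℂ, (Complex.exp (θ * Complex.I) * ∑ i, conj (z (i + 1)) * z i).re
        ≤ cos θ * ∑ i, ‖z i‖ ^ 2 := by
  have hdiag : ∀ u : ℂ, (Complex.exp (θ * Complex.I) * (conj u * u)).re = cos θ * ‖u‖ ^ 2 := by
    intro u
    rw [Complex.conj_mul', ← Complex.ofReal_pow, Complex.re_mul_ofReal,
      Complex.exp_ofReal_mul_I_re]
  rw [IsNMonotone,
    ← (Equiv.piCongrRight fun _ => Complex.basisOneI.equivFun.toEquiv).forall_congr_right]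
  refine forall_congr' fun z => ?_
  simp only [Equiv.piCongrRight_apply, Pi.map_apply, LinearEquiv.coe_toEquiv,
    Module.Basis.equivFun_apply, Complex.coe_basisOneI_repr, sub_dotProduct,
    Finset.sum_sub_distrib, dotProduct_rotation_mulVec, hdiag, ← Complex.re_sum, ← Finset.mul_sum,
    sub_nonpos]

theorem transpose_mul_J_mul {R : Type*} [CommRing R] (P : Matrix (Fin 2) (Fin 2) R) :
    Pᵀ * !![0, -1; 1, 0] * P = P.det • !![0, -1; 1, 0] := by
  ext i j
  fin_cases i <;> fin_cases j <;>
    simp [Matrix.mul_apply, Fin.sum_univ_two, det_fin_two] <;> ring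

theorem PosDef.exists_transpose_mul_mul_eq_one_and_det_eq {S : Matrix (Fin 2) (Fin 2) ℝ}
    (hS : S.PosDef) {ε : ℝ} (hε : |ε| = 1) :
    ∃ P : Matrix (Fin 2) (Fin 2) ℝ, Pᵀ * S * P = 1 ∧ P.det = ε / √S.det := by
  have ha : 0 < S 0 0 := hS.diag_pos
  have hd : 0 < S.det := hS.det_pos
  have hsym : S 1 0 = S 0 1 := by simpa using hS.isHermitian.apply 0 1
  have hε2 : ε ^ 2 = 1 := by rw [← sq_abs, hε, one_pow]
  have hsa := sq_sqrt ha.le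
  have hsd : √S.det ^ 2 = S 0 0 * S 1 1 - S 0 1 ^ 2 := by
    rw [sq_sqrt hd.le, det_fin_two, hsym]; ring
  have : √(S 0 0) ≠ 0 := (sqrt_pos.2 ha).ne'
  have : √S.det ≠ 0 := (sqrt_pos.2 hd).ne'
  refine ⟨!![1 / √(S 0 0), -(ε * S 0 1) / (√(S 0 0) * √S.det); 0, ε * √(S 0 0) / √S.det], ?_, ?_⟩
  · ext i j
    fin_cases i <;> fin_cases j <;>
      simp [Matrix.mul_apply, Fin.sum_univ_two, hsym] <;> field_simp
    all_goals simp only [hsa, hsd]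
    all_goals first | linear_combination S 0 0 * (S 0 0 * S 1 1 - S 0 1 ^ 2) * hε2 | simp
  · rw [det_fin_two_of]
    field_simp
    ring

theorem PosDef.exists_transpose_mul_add_smul_J_mul {S : Matrix (Fin 2) (Fin 2) ℝ}
    (hS : S.PosDef) (r : ℝ) : ∃ P : Matrix (Fin 2) (Fin 2) ℝ, IsUnit P.det ∧
      Pᵀ * (S + r • !![0, -1; 1, 0]) * P = 1 + (|r| / √S.det) • !![0, -1; 1, 0] := by
  obtain ⟨ε, hε, hεr⟩ : ∃ ε : ℝ, |ε| = 1 ∧ r * ε = |r| := by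
    rcases le_or_gt 0 r with hr | hr
    · exact ⟨1, abs_one, by rw [mul_one, abs_of_nonneg hr]⟩
    · exact ⟨-1, by simp, by rw [mul_neg_one, abs_of_neg hr]⟩
  obtain ⟨P, hPS, hPdet⟩ := hS.exists_transpose_mul_mul_eq_one_and_det_eq hε
  have hsd : √S.det ≠ 0 := (sqrt_pos.2 hS.det_pos).ne'
  refine ⟨P, hPdet ▸ (div_ne_zero (abs_pos.1 (hε ▸ one_pos)) hsd).isUnit, ?_⟩
  rw [Matrix.mul_add, Matrix.add_mul, hPS, Matrix.mul_smul, Matrix.smul_mul, transpose_mul_J_mul,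
    hPdet, smul_smul, ← mul_div_assoc, hεr]

theorem one_add_tan_smul_J {θ : ℝ} (hθ : cos θ ≠ 0) :
    1 + tan θ • !![0, -1; 1, 0] = (cos θ)⁻¹ • !![cos θ, -sin θ; sin θ, cos θ] := by
  ext i j
  fin_cases i <;> fin_cases j <;> simp [hθ, tan_eq_sin_div_cos] <;> field_simp

end Matrix

/-- Let `A` be a real `2×2` matrix with positive definite symmetric part `S`
and skew part `W = rJ`, `r ≠ 0`, where `J = [[0,−1],[1,0]]`. With `θ ∈ (0, π/2)` defined by
`|r| = √(det S)·tan θ`, the matrix `A` is `n`-monotone iff `nθ ≤ π`. -/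
theorem stmt11 (A S : Matrix (Fin 2) (Fin 2) ℝ) (r : ℝ)
    (hS : S = (1/2 : ℝ) • (A + Aᵀ)) (hSpd : S.PosDef)
    (hW : (1/2 : ℝ) • (A - Aᵀ) = r • !![0, -1; 1, 0])
    (θ : ℝ) (hθ : θ ∈ Set.Ioo 0 (π/2)) (htan : |r| = Real.sqrt S.det * Real.tan θ)
    (n : ℕ) (hn : 2 ≤ n) :
    haveI : NeZero n := ⟨by omega⟩
    ((∀ x : Fin n → (Fin 2 → ℝ),
        ∑ i : Fin n, (x (i + 1) - x i) ⬝ᵥ A.mulVec (x i) ≤ 0) ↔ n * θ ≤ π) := by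
  have : NeZero n := ⟨by omega⟩
  obtain ⟨hθ₀, hθ₁⟩ := hθ
  have hcos : 0 < cos θ := cos_pos_of_mem_Ioo ⟨by linarith [pi_pos], hθ₁⟩
  have hA : A = S + r • !![0, -1; 1, 0] := by rw [hS, ← hW]; module
  obtain ⟨P, hP, hPA⟩ := hSpd.exists_transpose_mul_add_smul_J_mul r
  rw [htan, mul_div_cancel_left₀ _ (sqrt_pos.2 hSpd.det_pos).ne', one_add_tan_smul_J hcos.ne',
    ← hA] at hPA
  calc IsNMonotone n A
      ↔ IsNMonotone n (Pᵀ * A * P) := (isNMonotone_transpose_mul_mul_iff hP).symm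
    _ ↔ IsNMonotone n !![cos θ, -sin θ; sin θ, cos θ] := by
        rw [hPA, isNMonotone_smul_iff (inv_pos.2 hcos)]
    _ ↔ _ := isNMonotone_rotation_iff θ
    _ ↔ ∀ ψ : AddChar (Fin n) ℂ, (Complex.exp (θ * Complex.I) * ψ 1).re ≤ cos θ :=
        AddChar.forall_re_mul_sum_conj_add_mul_le_iff 1 _ _
    _ ↔ n * θ ≤ π := AddChar.forall_re_exp_mul_apply_one_le_cos_iff hθ₀.le (by linarith)
end

section
/- Let X be a real Hilbert space and S : X → X symmetric positive definite with bounded inverse. Then for every n ≥ 2, Fitzpatrick's function of the operator Tx = {Sx} is F_{S,n}(x,y) = ⟨x,y⟩ + (1 − 1/n)·(1/2)⟨y−Sx, S⁻¹(y−Sx)⟩, equivalently (1/n)⟨x,y⟩ + (1 − 1/n)((1/2)⟨x,Sx⟩ + (1/2)⟨y,S⁻¹y⟩). -/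
/-!
Write `y = S x + S p` and `q v = ⟪v, S v⟫`. Polarization turns each chain term into a difference
of values of `q`; after telescoping, the value of the chain `x₁, …, x_{n-1}` is
`⟪x₁ - x, S p⟫ - ½ ∑ q vⱼ`, where `v₁, …, vₙ` are the `n` increments of the closed chain
`x → x₁ → ⋯ → x_{n-1} → x`, which sum to zero. Completing the square,
`0 ≤ q (v₁ - (1 - 1/n) p) + ∑_{j ≥ 2} q (vⱼ + p/n)` bounds this by `½ (1 - 1/n) q p`, with
equality for the evenly spaced chain `xᵢ = x + ((n - i)/n) p`.
-/

open scoped RealInnerProductSpace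

namespace LinearMap

variable {X : Type*} [NormedAddCommGroup X] [InnerProductSpace ℝ X] {T : X →ₗ[ℝ] X}

theorem IsSymmetric.inner_apply_comm (hT : T.IsSymmetric) (u v : X) : ⟪u, T v⟫ = ⟪v, T u⟫ := by
  rw [← hT, real_inner_comm]

theorem IsSymmetric.inner_sub_apply_eq (hT : T.IsSymmetric) (a b : X) :
    ⟪b - a, T a⟫ = (⟪b, T b⟫ - ⟪a, T a⟫ - ⟪b - a, T (b - a)⟫) / 2 := by
  simp only [map_sub, inner_sub_left, inner_sub_right, hT.inner_apply_comm a b]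
  ring

theorem IsSymmetric.inner_add_smul_apply_add_smul (hT : T.IsSymmetric) (v p : X) (t : ℝ) :
    ⟪v + t • p, T (v + t • p)⟫ = ⟪v, T v⟫ + 2 * t * ⟪v, T p⟫ + t ^ 2 * ⟪p, T p⟫ := by
  simp only [map_add, map_smul, inner_add_left, inner_add_right, real_inner_smul_left,
    real_inner_smul_right, hT.inner_apply_comm p v]
  ring

theorem IsSymmetric.sum_range_inner_sub_apply (hT : T.IsSymmetric) (z : ℕ → X) (m : ℕ) :
    ∑ i ∈ Finset.range m, ⟪z (i + 1) - z i, T (z i)⟫ =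
      (⟪z m, T (z m)⟫ - ⟪z 0, T (z 0)⟫
        - ∑ i ∈ Finset.range m, ⟪z (i + 1) - z i, T (z (i + 1) - z i)⟫) / 2 := by
  rw [← Finset.sum_range_sub (fun i => ⟪z i, T (z i)⟫), ← Finset.sum_sub_distrib,
    Finset.sum_div]
  exact Finset.sum_congr rfl fun i _ => hT.inner_sub_apply_eq _ _

theorem IsPositive.inner_apply_sub_half_sum_le (hT : T.IsPositive) (a b p : X) (d : ℕ → X)
    (m : ℕ) (hsum : a + ∑ i ∈ Finset.range m, d i + b = 0) :
    ⟪a, T p⟫ - (⟪a, T a⟫ + ∑ i ∈ Finset.range m, ⟪d i, T (d i)⟫ + ⟪b, T b⟫) / 2 ≤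
      (1 - 1 / ((m : ℝ) + 2)) * (⟪p, T p⟫ / 2) := by
  have hS := hT.isSymmetric
  set N : ℝ := (m : ℝ) + 2
  have hN : 0 < N := by positivity
  have hd : ∑ i ∈ Finset.range m, ⟪d i, T p⟫ = -⟪a, T p⟫ - ⟪b, T p⟫ := by
    have : ∑ i ∈ Finset.range m, d i = -a - b := by rw [← sub_eq_zero, ← hsum]; abel
    rw [← sum_inner, this, inner_sub_left, inner_neg_left]
  have hsq : 0 ≤ ⟪a + (-(N - 1) / N) • p, T (a + (-(N - 1) / N) • p)⟫
      + ∑ i ∈ Finset.range m, ⟪d i + (1 / N) • p, T (d i + (1 / N) • p)⟫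
      + ⟪b + (1 / N) • p, T (b + (1 / N) • p)⟫ :=
    add_nonneg (add_nonneg (hT.inner_nonneg_right _)
      (Finset.sum_nonneg fun i _ => hT.inner_nonneg_right _)) (hT.inner_nonneg_right _)
  simp only [hS.inner_add_smul_apply_add_smul, Finset.sum_add_distrib, ← Finset.sum_mul,
    ← Finset.mul_sum, hd, Finset.sum_const, Finset.card_range, nsmul_eq_mul] at hsq
  have hm : (m : ℝ) = N - 2 := by simp [N]
  rw [hm] at hsq
  field_simp at hsq ⊢
  nlinarith [hN]

theorem IsSymmetric.inner_sub_apply_rightInverse (hT : T.IsSymmetric) {R : X →ₗ[ℝ] X}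
    (hR : ∀ v, T (R v) = v) (x y : X) :
    ⟪y - T x, R (y - T x)⟫ = ⟪x, T x⟫ - 2 * ⟪x, y⟫ + ⟪y, R y⟫ := by
  have hTR (u v : X) : ⟪T u, R v⟫ = ⟪u, v⟫ := by rw [hT, hR]
  have hRT : ⟪y, R (T x)⟫ = ⟪x, y⟫ := by
    rw [← hR y, hTR, hT.inner_apply_comm]
  simp only [map_sub, inner_sub_left, inner_sub_right, hTR, hRT]
  ring

end LinearMap

open LinearMap

section Chain

variable {X : Type*} [NormedAddCommGroup X] [InnerProductSpace ℝ X] {T : X →ₗ[ℝ] X}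

/-- The bracket in `F_{S,n}` for `n = m + 2`, with `z 0, …, z m` standing for `x₁, …, x_{n-1}`. -/
def chainValue (T : X →ₗ[ℝ] X) (x y : X) (m : ℕ) (z : ℕ → X) : ℝ :=
  ∑ i ∈ Finset.range m, ⟪z (i + 1) - z i, T (z i)⟫ + ⟪x - z m, T (z m)⟫ + ⟪z 0 - x, y⟫

theorem chainValue_eq (hT : T.IsSymmetric) {x y p : X} (hy : y = T x + T p) (m : ℕ)
    (z : ℕ → X) :
    chainValue T x y m z = ⟪z 0 - x, T p⟫ - (⟪z 0 - x, T (z 0 - x)⟫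
      + ∑ i ∈ Finset.range m, ⟪z (i + 1) - z i, T (z (i + 1) - z i)⟫
      + ⟪x - z m, T (x - z m)⟫) / 2 := by
  rw [chainValue, hT.sum_range_inner_sub_apply, hT.inner_sub_apply_eq, hy]
  simp only [map_sub, inner_add_right, inner_sub_left, inner_sub_right,
    hT.inner_apply_comm x (z 0)]
  ring

theorem chainValue_le (hT : T.IsPositive) {x y p : X} (hy : y = T x + T p) (m : ℕ)
    (z : ℕ → X) : chainValue T x y m z ≤ (1 - 1 / ((m : ℝ) + 2)) * (⟪p, T p⟫ / 2) := by
  rw [chainValue_eq hT.isSymmetric hy]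
  refine hT.inner_apply_sub_half_sum_le _ _ _ _ m ?_
  rw [Finset.sum_range_sub]
  abel

theorem chainValue_optimal (hT : T.IsSymmetric) {x y p : X} (hy : y = T x + T p) (m : ℕ) :
    chainValue T x y m (fun i => x + (((m : ℝ) + 1 - i) / ((m : ℝ) + 2)) • p) =
      (1 - 1 / ((m : ℝ) + 2)) * (⟪p, T p⟫ / 2) := by
  set N : ℝ := (m : ℝ) + 2
  have hN : N ≠ 0 := by positivity
  have h_first : x + (((m : ℝ) + 1 - (0 : ℕ)) / N) • p - x = ((N - 1) / N) • p := by
    push_cast; module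
  have h_step (i : ℕ) : x + (((m : ℝ) + 1 - (i + 1 : ℕ)) / N) • p
      - (x + (((m : ℝ) + 1 - i) / N) • p) = (-(1 / N)) • p := by
    push_cast; module
  have h_last : x - (x + (((m : ℝ) + 1 - m) / N) • p) = (-(1 / N)) • p := by
    module
  rw [chainValue_eq hT hy, h_first, h_last, Finset.sum_congr rfl fun i _ => by rw [h_step i]]
  simp only [map_smul, real_inner_smul_left, real_inner_smul_right, Finset.sum_const,
    Finset.card_range, nsmul_eq_mul]
  field_simp
  ring

theorem iSup_chainValue (hT : T.IsPositive) {x y p : X} (hy : y = T x + T p) (m : ℕ) :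
    ⨆ z : ℕ → X, (chainValue T x y m z : EReal) =
      ((1 - 1 / ((m : ℝ) + 2)) * (⟪p, T p⟫ / 2) : ℝ) :=
  le_antisymm (iSup_le fun z => EReal.coe_le_coe_iff.mpr (chainValue_le hT hy m z))
    (le_iSup_of_le _ (EReal.coe_le_coe_iff.mpr (chainValue_optimal hT.isSymmetric hy m).ge))

end Chain

theorem stmt15_general
    {X : Type*} [NormedAddCommGroup X] [InnerProductSpace ℝ X]
    (S : X →L[ℝ] X)
    (hsym : ∀ x y : X, ⟪S x, y⟫ = ⟪x, S y⟫)
    (hcoer : ∃ c : ℝ, 0 < c ∧ ∀ x : X, c * ‖x‖ ^ 2 ≤ ⟪x, S x⟫)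
    (Sinv : X →L[ℝ] X) (hinv₁ : S.comp Sinv = ContinuousLinearMap.id ℝ X)
    (n : ℕ) (hn : 2 ≤ n) (x y : X) :
    (((⟪x, y⟫ : ℝ) : EReal) +
      ⨆ z : ℕ → X,
        (((∑ i ∈ Finset.range (n - 2), ⟪z (i + 1) - z i, S (z i)⟫)
            + ⟪x - z (n - 2), S (z (n - 2))⟫ + ⟪z 0 - x, y⟫ : ℝ) : EReal)) =
      ((⟪x, y⟫ + (1 - 1 / (n : ℝ)) * ((1/2 : ℝ) * ⟪y - S x, Sinv (y - S x)⟫) : ℝ) : EReal) ∧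
    (⟪x, y⟫ + (1 - 1 / (n : ℝ)) * ((1/2 : ℝ) * ⟪y - S x, Sinv (y - S x)⟫ : ℝ)
      = (1 / (n : ℝ)) * ⟪x, y⟫
        + (1 - 1 / (n : ℝ)) * ((1/2 : ℝ) * ⟪x, S x⟫ + (1/2 : ℝ) * ⟪y, Sinv y⟫)) := by
  obtain ⟨m, rfl⟩ : ∃ m, n = m + 2 := ⟨n - 2, by omega⟩
  obtain ⟨c, hc, hcoer⟩ := hcoer
  have hS : (S : X →ₗ[ℝ] X).IsPositive := (isPositive_iff _).mpr
    ⟨hsym, fun v => real_inner_comm v (S v) ▸ (by positivity : 0 ≤ c * ‖v‖ ^ 2).trans (hcoer v)⟩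
  have hSSinv (v : X) : S (Sinv v) = v := DFunLike.congr_fun hinv₁ v
  set p := Sinv (y - S x)
  have hy : y = S x + S p := by rw [hSSinv]; abel
  constructor
  · have hp : ⟪y - S x, p⟫ = ⟪p, S p⟫ := by rw [hSSinv, real_inner_comm]
    have hsup := iSup_chainValue hS hy m
    rw [Nat.add_sub_cancel]
    change _ + ⨆ z, (chainValue (S : X →ₗ[ℝ] X) x y m z : EReal) = _
    rw [hsup, ← EReal.coe_add, EReal.coe_eq_coe_iff, hp]
    push_cast
    ring
  · have := hS.isSymmetric.inner_sub_apply_rightInverse (R := (Sinv : X →ₗ[ℝ] X)) hSSinv x y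
    simp only [ContinuousLinearMap.coe_coe] at this
    rw [this]
    ring

/-- For a symmetric, coercive (positive definite with bounded inverse
`Sinv`) continuous linear map `S` on a real Hilbert space and `n ≥ 2`, Fitzpatrick's
function of the operator `Tx = {Sx}`,
`F_{S,n}(x,y) = ⟨x,y⟩ + sup_{x₁,…,x_{n−1}} [Σ_{i=1}^{n−2} ⟨x_{i+1}−x_i, S x_i⟩ +
⟨x−x_{n−1}, S x_{n−1}⟩ + ⟨x₁−x, y⟩]` (chains encoded as `z : ℕ → X`, 0-indexed),
equals `⟨x,y⟩ + (1−1/n)·(1/2)⟨y−Sx, S⁻¹(y−Sx)⟩`, equivalently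
`(1/n)⟨x,y⟩ + (1−1/n)((1/2)⟨x,Sx⟩ + (1/2)⟨y,S⁻¹y⟩)`. -/
theorem stmt15
    {X : Type*} [NormedAddCommGroup X] [InnerProductSpace ℝ X] [CompleteSpace X]
    (S : X →L[ℝ] X)
    (hsym : ∀ x y : X, ⟪S x, y⟫ = ⟪x, S y⟫)
    (hcoer : ∃ c : ℝ, 0 < c ∧ ∀ x : X, c * ‖x‖ ^ 2 ≤ ⟪x, S x⟫)
    (Sinv : X →L[ℝ] X) (hinv₁ : S.comp Sinv = ContinuousLinearMap.id ℝ X)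
    (hinv₂ : Sinv.comp S = ContinuousLinearMap.id ℝ X)
    (n : ℕ) (hn : 2 ≤ n) (x y : X) :
    (((⟪x, y⟫ : ℝ) : EReal) +
      ⨆ z : ℕ → X,
        (((∑ i ∈ Finset.range (n - 2), ⟪z (i + 1) - z i, S (z i)⟫)
            + ⟪x - z (n - 2), S (z (n - 2))⟫ + ⟪z 0 - x, y⟫ : ℝ) : EReal)) =
      ((⟪x, y⟫ + (1 - 1 / (n : ℝ)) * ((1/2 : ℝ) * ⟪y - S x, Sinv (y - S x)⟫) : ℝ) : EReal) ∧
    (⟪x, y⟫ + (1 - 1 / (n : ℝ)) * ((1/2 : ℝ) * ⟪y - S x, Sinv (y - S x)⟫ : ℝ)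
      = (1 / (n : ℝ)) * ⟪x, y⟫
        + (1 - 1 / (n : ℝ)) * ((1/2 : ℝ) * ⟪x, S x⟫ + (1/2 : ℝ) * ⟪y, Sinv y⟫)) :=
  stmt15_general S hsym hcoer Sinv hinv₁ n hn x y
end

section
/- Let X be a real Hilbert space and A : X → X a continuous linear map whose symmetric part S = (A+A*)/2 is positive definite with bounded inverse. Then the Fitzpatrick function of A is F_{A,2}(x,y) = ⟨x,y⟩ + (1/4)⟨y−Ax, S⁻¹(y−Ax)⟩. -/
/-!
Write `x₁ = x + u` and `z = y - A x`. Since `⟪u, A u⟫ = ⟪u, S u⟫`, the function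
`x₁ ↦ ⟪x - x₁, y - A x₁⟫ = ⟪u, S u⟫ - ⟪u, z⟫` has the positive operator `S` as its quadratic part;
completing the square around the point `w` with `S w = z / 2` gives
`⟪u - w, S (u - w)⟫ - ⟪w, S w⟫`, whose infimum `-⟪w, S w⟫ = -¼ ⟪z, S⁻¹ z⟫` is attained at `u = w`.
-/

open scoped RealInnerProductSpace

namespace ContinuousLinearMap

variable {X : Type*} [NormedAddCommGroup X] [InnerProductSpace ℝ X]

theorem isSelfAdjoint_half_smul_add_adjoint [CompleteSpace X] (A : X →L[ℝ] X) :
    IsSelfAdjoint ((1 / 2 : ℝ) • (A + adjoint A)) :=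
  (IsSelfAdjoint.all (1 / 2 : ℝ)).smul (star_eq_adjoint A ▸ IsSelfAdjoint.add_star_self A)

theorem inner_apply_self_eq_half_smul_add_adjoint [CompleteSpace X] (A : X →L[ℝ] X) (u : X) :
    ⟪u, A u⟫ = ⟪u, ((1 / 2 : ℝ) • (A + adjoint A)) u⟫ := by
  simp only [smul_apply, add_apply, inner_smul_right, inner_add_right, adjoint_inner_right,
    real_inner_comm (A u) u]
  ring

variable {A S : X →L[ℝ] X} (hAS : ∀ u, ⟪u, A u⟫ = ⟪u, S u⟫) (hSpos : S.IsPositive)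
  {x y w : X} (hw : S w = (1 / 2 : ℝ) • (y - A x))
include hAS hSpos hw

theorem inner_sub_sub_apply_eq_sq_sub (x₁ : X) :
    ⟪x - x₁, y - A x₁⟫ = ⟪x₁ - x - w, S (x₁ - x - w)⟫ - ⟪w, S w⟫ := by
  obtain ⟨u, rfl⟩ : ∃ u, x₁ = x + u := ⟨x₁ - x, (add_sub_cancel x x₁).symm⟩
  have hcross : ⟪w, S u⟫ = ⟪u, S w⟫ := by rw [← hSpos.inner_left_eq_inner_right, real_inner_comm]
  have hleft : x - (x + u) = -u := by abel
  have hright : y - A (x + u) = (y - A x) - A u := by rw [map_add]; abel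
  rw [hleft, hright, add_sub_cancel_left]
  simp only [map_sub, inner_sub_left, inner_sub_right, inner_neg_left, hcross, hw, hAS,
    inner_smul_right]
  ring

theorem iInf_inner_sub_sub_apply_eq :
    ⨅ x₁, ⟪x - x₁, y - A x₁⟫ = -⟪w, S w⟫ := by
  refine IsGLB.ciInf_eq <| IsLeast.isGLB ⟨⟨x + w, ?_⟩, ?_⟩
  · dsimp only
    rw [inner_sub_sub_apply_eq_sq_sub hAS hSpos hw, add_sub_cancel_left, sub_self, map_zero,
      inner_zero_left, zero_sub]
  · rintro _ ⟨x₁, rfl⟩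
    dsimp only
    rw [inner_sub_sub_apply_eq_sq_sub hAS hSpos hw]
    linarith [hSpos.inner_nonneg_right (x₁ - x - w)]

end ContinuousLinearMap

open ContinuousLinearMap in
theorem stmt16_general
    {X : Type*} [NormedAddCommGroup X] [InnerProductSpace ℝ X] [CompleteSpace X]
    (A : X →L[ℝ] X)
    (S : X →L[ℝ] X) (hS : S = (1/2 : ℝ) • (A + ContinuousLinearMap.adjoint A))
    (hcoer : ∃ c : ℝ, 0 < c ∧ ∀ x : X, c * ‖x‖ ^ 2 ≤ ⟪x, S x⟫)
    (Sinv : X →L[ℝ] X) (hinv₁ : S.comp Sinv = ContinuousLinearMap.id ℝ X) :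
    ∀ x y : X,
      ⟪x, y⟫ - (⨅ x₁ : X, ⟪x - x₁, y - A x₁⟫) =
        ⟪x, y⟫ + (1/4 : ℝ) * ⟪y - A x, Sinv (y - A x)⟫ := by
  intro x y
  obtain ⟨c, hc, hcoer⟩ := hcoer
  have hAS (u : X) : ⟪u, A u⟫ = ⟪u, S u⟫ := hS ▸ inner_apply_self_eq_half_smul_add_adjoint A u
  have hpos : S.IsPositive := (isPositive_iff' S).2
    ⟨hS ▸ isSelfAdjoint_half_smul_add_adjoint A,
      fun v => real_inner_comm v (S v) ▸ (by positivity : 0 ≤ c * ‖v‖ ^ 2).trans (hcoer v)⟩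
  set z := y - A x
  have hw : S ((1 / 2 : ℝ) • Sinv z) = (1 / 2 : ℝ) • z := by
    rw [map_smul, ← comp_apply, hinv₁, id_apply]
  rw [iInf_inner_sub_sub_apply_eq hAS hpos hw, hw, inner_smul_left, inner_smul_right,
    real_inner_comm z, conj_trivial]
  ring

/-- For a continuous linear map `A` on a real Hilbert space whose symmetric
part `S = (A + A*)/2` is positive definite (coercive) with bounded inverse `Sinv`, the
Fitzpatrick function `F_{A,2}(x,y) = ⟨x,y⟩ − inf_{x₁} ⟨x−x₁, y−Ax₁⟩` equals
`⟨x,y⟩ + (1/4)⟨y−Ax, S⁻¹(y−Ax)⟩`. -/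
theorem stmt16
    {X : Type*} [NormedAddCommGroup X] [InnerProductSpace ℝ X] [CompleteSpace X]
    (A : X →L[ℝ] X)
    (S : X →L[ℝ] X) (hS : S = (1/2 : ℝ) • (A + ContinuousLinearMap.adjoint A))
    (hcoer : ∃ c : ℝ, 0 < c ∧ ∀ x : X, c * ‖x‖ ^ 2 ≤ ⟪x, S x⟫)
    (Sinv : X →L[ℝ] X) (hinv₁ : S.comp Sinv = ContinuousLinearMap.id ℝ X)
    (hinv₂ : Sinv.comp S = ContinuousLinearMap.id ℝ X) :
    ∀ x y : X,
      ⟪x, y⟫ - (⨅ x₁ : X, ⟪x - x₁, y - A x₁⟫) =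
        ⟪x, y⟫ + (1/4 : ℝ) * ⟪y - A x, Sinv (y - A x)⟫ :=
  stmt16_general A S hS hcoer Sinv hinv₁
end

section
/- The linear coaxial constitutive law Ax = λ(tr x)e + 2μx + tr(hx)e on symmetric 3×3 matrices (with h a traceless symmetric matrix) is monotone, i.e., tr((Ax)x) ≥ 0 for all symmetric x, if and only if μ ≥ 0, 3λ + 2μ ≥ 0, and tr(h²) ≤ (8/3)μ(3λ + 2μ). -/
/-!
Write `N` for the dimension, `κ = Nλ + 2μ`, and split a symmetric `x = t e + d` with `d`
traceless. Since `tr h = 0`, the quadratic form becomes `N κ t² + N t tr(hd) + 2μ tr(d²)`.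
By Cauchy–Schwarz for the Frobenius inner product, `tr(hd)² ≤ tr(h²) tr(d²)`, so the form is
nonnegative as soon as `μ, κ ≥ 0` and the discriminant condition `N tr(h²) ≤ 8μκ` holds.
Conversely, testing on a traceless `x`, on `x = e` and on `x = t e + h` for all `t` forces
`μ ≥ 0`, `κ ≥ 0` and (via the discriminant of a quadratic in `t`) `N tr(h²) ≤ 8μκ`.
-/

open Matrix

theorem Matrix.trace_transpose_mul_sq_le {m n R : Type*} [Fintype m] [Fintype n]
    [CommRing R] [LinearOrder R] [IsStrictOrderedRing R] (A B : Matrix m n R) :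
    (Aᵀ * B).trace ^ 2 ≤ (Aᵀ * A).trace * (Bᵀ * B).trace := by
  simp only [← vec_dotProduct_vec, dotProduct, ← sq]
  exact Finset.sum_mul_sq_le_sq_mul_sq _ _ _

theorem Matrix.trace_mul_self_nonneg_of_transpose_eq {n : Type*} [Fintype n]
    {x : Matrix n n ℝ} (hx : xᵀ = x) : 0 ≤ (x * x).trace := by
  simpa [hx] using (posSemidef_conjTranspose_mul_self x).trace_nonneg

theorem add_add_nonneg_of_sq_le_four_mul {a b c : ℝ} (ha : 0 ≤ a) (hc : 0 ≤ c)
    (hb : b ^ 2 ≤ 4 * a * c) : 0 ≤ a + b + c := by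
  nlinarith [sq_nonneg (a - c)]

theorem mul_le_of_mul_sq_le {H k C : ℝ} (hH : 0 ≤ H) (hC : 0 ≤ C)
    (h : k * H ^ 2 ≤ C * H) : k * H ≤ C := by
  rcases hH.eq_or_lt with rfl | hpos
  · simpa using hC
  · nlinarith

variable {n : Type*} [Fintype n] [DecidableEq n]

def coaxialLaw (l μ : ℝ) (h x : Matrix n n ℝ) : Matrix n n ℝ :=
  (l * x.trace) • 1 + (2 * μ) • x + (h * x).trace • 1

variable (l μ : ℝ) {h : Matrix n n ℝ}

theorem trace_coaxialLaw_mul (x : Matrix n n ℝ) :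
    (coaxialLaw l μ h x * x).trace =
      l * x.trace ^ 2 + 2 * μ * (x * x).trace + (h * x).trace * x.trace := by
  simp only [coaxialLaw, add_mul, smul_mul, one_mul, trace_add, trace_smul, smul_eq_mul]
  ring

theorem trace_coaxialLaw_mul_of_trace_eq_zero {x : Matrix n n ℝ} (hx : x.trace = 0) :
    (coaxialLaw l μ h x * x).trace = 2 * μ * (x * x).trace := by
  simp [trace_coaxialLaw_mul, hx]

theorem trace_coaxialLaw_smul_one_add_mul (htr : h.trace = 0) {d : Matrix n n ℝ}
    (hd : d.trace = 0) (t : ℝ) :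
    (coaxialLaw l μ h (t • 1 + d) * (t • 1 + d)).trace =
      Fintype.card n * (Fintype.card n * l + 2 * μ) * t ^ 2
        + Fintype.card n * t * (h * d).trace + 2 * μ * (d * d).trace := by
  rw [trace_coaxialLaw_mul]
  simp only [mul_add, add_mul, smul_mul, Matrix.mul_smul, one_mul, mul_one, trace_add, trace_smul,
    trace_one, htr, hd, smul_eq_mul]
  ring

variable [Nonempty n]

theorem trace_coaxialLaw_mul_nonneg (hsym : hᵀ = h) (htr : h.trace = 0) (hμ : 0 ≤ μ)
    (hκ : 0 ≤ Fintype.card n * l + 2 * μ)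
    (hh : Fintype.card n * (h * h).trace ≤ 8 * μ * (Fintype.card n * l + 2 * μ))
    {x : Matrix n n ℝ} (hx : xᵀ = x) : 0 ≤ (coaxialLaw l μ h x * x).trace := by
  set N := (Fintype.card n : ℝ)
  have hN : 0 < N := by positivity
  set t := x.trace / N
  set d := x - t • 1
  have hd : d.trace = 0 := by
    simp only [d, t, trace_sub, trace_smul, trace_one, smul_eq_mul]
    field_simp
    ring
  have hdsym : dᵀ = d := by simp [d, hx]
  have hcs : (h * d).trace ^ 2 ≤ (h * h).trace * (d * d).trace := by
    simpa [hsym, hdsym] using trace_transpose_mul_sq_le h d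
  have hdd := trace_mul_self_nonneg_of_transpose_eq hdsym
  rw [show x = t • 1 + d by simp [d], trace_coaxialLaw_smul_one_add_mul l μ htr hd]
  apply add_add_nonneg_of_sq_le_four_mul (by positivity) (by positivity)
  calc (N * t * (h * d).trace) ^ 2 ≤ N ^ 2 * t ^ 2 * ((h * h).trace * (d * d).trace) := by
        rw [mul_pow, mul_pow]; gcongr
    _ = N * t ^ 2 * (d * d).trace * (N * (h * h).trace) := by ring
    _ ≤ N * t ^ 2 * (d * d).trace * (8 * μ * (N * l + 2 * μ)) := by gcongr
    _ = 4 * (N * (N * l + 2 * μ) * t ^ 2) * (2 * μ * (d * d).trace) := by ring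

theorem card_mul_trace_mul_self_le (hsym : hᵀ = h) (htr : h.trace = 0) (hμ : 0 ≤ μ)
    (hκ : 0 ≤ Fintype.card n * l + 2 * μ)
    (hmono : ∀ t : ℝ, 0 ≤ (coaxialLaw l μ h (t • 1 + h) * (t • 1 + h)).trace) :
    Fintype.card n * (h * h).trace ≤ 8 * μ * (Fintype.card n * l + 2 * μ) := by
  set N := (Fintype.card n : ℝ)
  set H := (h * h).trace
  have hN : 0 < N := by positivity
  have hH : 0 ≤ H := trace_mul_self_nonneg_of_transpose_eq hsym
  have hdisc := discrim_le_zero (a := N * (N * l + 2 * μ)) (b := N * H) (c := 2 * μ * H)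
    fun t ↦ by linarith [hmono t, trace_coaxialLaw_smul_one_add_mul l μ htr htr t]
  refine mul_le_of_mul_sq_le hH (by positivity) ?_
  rw [discrim] at hdisc
  nlinarith

/-- The linear coaxial law `A x = λ(tr x)e + 2μ x + tr(h x)e` on symmetric
`3×3` real matrices (`h` symmetric traceless) is monotone, i.e. `tr((A x) x) ≥ 0` for all
symmetric `x`, iff `μ ≥ 0`, `3λ + 2μ ≥ 0` and `tr(h²) ≤ (8/3)μ(3λ + 2μ)`. -/
theorem stmt18 (l μ : ℝ) (h : Matrix (Fin 3) (Fin 3) ℝ)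
    (hsym : hᵀ = h) (htr : h.trace = 0) :
    ((∀ x : Matrix (Fin 3) (Fin 3) ℝ, xᵀ = x →
        0 ≤ (((l * x.trace) • (1 : Matrix (Fin 3) (Fin 3) ℝ) + (2 * μ) • x
            + (h * x).trace • (1 : Matrix (Fin 3) (Fin 3) ℝ)) * x).trace)
      ↔ (0 ≤ μ ∧ 0 ≤ 3 * l + 2 * μ ∧ (h * h).trace ≤ (8/3 : ℝ) * μ * (3 * l + 2 * μ))) := by
  change (∀ x, xᵀ = x → 0 ≤ (coaxialLaw l μ h x * x).trace) ↔ _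
  have hcard : (Fintype.card (Fin 3) : ℝ) = 3 := by simp
  constructor
  · intro hmono
    have hμ : 0 ≤ μ := by
      have hdiag := hmono (diagonal ![1, -1, 0]) (diagonal_transpose _)
      rw [trace_coaxialLaw_mul_of_trace_eq_zero l μ (by simp [Fin.sum_univ_three])] at hdiag
      simp [diagonal_mul_diagonal, Fin.sum_univ_three] at hdiag
      linarith
    have hκ : 0 ≤ 3 * l + 2 * μ := by
      have hone := hmono 1 transpose_one
      rw [trace_coaxialLaw_mul] at hone
      simp [htr] at hone
      linarith
    have hh := card_mul_trace_mul_self_le l μ hsym htr hμ (by rwa [hcard])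
      fun t ↦ hmono _ (by simp [hsym])
    rw [hcard] at hh
    exact ⟨hμ, hκ, by linarith⟩
  · rintro ⟨hμ, hκ, hh⟩ x hx
    exact trace_coaxialLaw_mul_nonneg l μ hsym htr hμ (by rwa [hcard])
      (by rw [hcard]; linarith) hx
end
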